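/- arXiv:2105.06547 — 3 statements merged into one kernel-verified Lean document; each statement's English description precedes it below -/
import Mathlib

section
/- For any measurable function h on a finite measure space with total measure 1 (normalized measure), for exponents 1 ≤ q ≤ p < ∞, the regularized norms satisfy ‖h‖_{Ḃq} ≤ ‖h‖_{Ḃp} + sqrt(q⁻² − p⁻²), where ‖h‖_{Ḃp} := ‖ sqrt(|h|² + p⁻²) ‖_{L^p}. -/
open MeasureTheory
open scoped ENNReal NNReal

private lemma sqrt_add_le_aux {a b : ℝ} (ha : 0 ≤ a) (hb : 0 ≤ b) :
    Real.sqrt (a + b) ≤ Real.sqrt a + Real.sqrt b := by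
  have h1 := Real.sq_sqrt ha
  have h2 := Real.sq_sqrt hb
  have h3 := Real.sqrt_nonneg a
  have h4 := Real.sqrt_nonneg b
  have : a + b ≤ (Real.sqrt a + Real.sqrt b) ^ 2 := by nlinarith
  calc Real.sqrt (a + b) ≤ Real.sqrt ((Real.sqrt a + Real.sqrt b) ^ 2) :=
        Real.sqrt_le_sqrt this
    _ = Real.sqrt a + Real.sqrt b := Real.sqrt_sq (by positivity)

private lemma eLpNorm_eq_aux {Ω : Type*} [MeasurableSpace Ω] (μ : Measure Ω)
    (f : Ω → ℝ) (r : ℝ) (hr : 1 ≤ r) (h0 : ∀ x, 0 ≤ f x)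
    (hi : Integrable (fun x => f x ^ r) μ) :
    eLpNorm f (ENNReal.ofReal r) μ = ENNReal.ofReal ((∫ x, f x ^ r ∂μ) ^ (1 / r)) := by
  have hr0 : 0 < r := lt_of_lt_of_le one_pos hr
  have hne : ENNReal.ofReal r ≠ 0 := by simp [ENNReal.ofReal_eq_zero, not_le, hr0]
  have htr : (ENNReal.ofReal r).toReal = r := ENNReal.toReal_ofReal hr0.le
  rw [eLpNorm_eq_lintegral_rpow_enorm_toReal hne ENNReal.ofReal_ne_top, htr]
  have hlint : (∫⁻ x, ‖f x‖ₑ ^ r ∂μ) = ENNReal.ofReal (∫ x, f x ^ r ∂μ) := by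
    rw [ofReal_integral_eq_lintegral_ofReal hi (Filter.Eventually.of_forall fun x =>
      Real.rpow_nonneg (h0 x) r)]
    apply lintegral_congr fun x => ?_
    rw [← ENNReal.ofReal_rpow_of_nonneg (h0 x) hr0.le, Real.enorm_eq_ofReal (h0 x)]
  rw [hlint, ← ENNReal.ofReal_rpow_of_nonneg
    (integral_nonneg fun x => Real.rpow_nonneg (h0 x) r) (by positivity)]

/-- Modified Hölder inequality for the regularized (dotted) `L^p` norms on a
probability (normalized) measure space:
`‖h‖_{Ḃq} ≤ ‖h‖_{Ḃp} + sqrt(q⁻² − p⁻²)` for `1 ≤ q ≤ p < ∞`, where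
`‖h‖_{Ḃp} := ‖ sqrt(|h|² + p⁻²) ‖_{L^p}`. -/
theorem stmt_0 {Ω : Type*} [MeasurableSpace Ω] (μ : Measure Ω) [IsProbabilityMeasure μ]
    {N : ℕ} (h : Ω → EuclideanSpace ℝ (Fin N)) (p q : ℝ)
    (hq : 1 ≤ q) (hqp : q ≤ p)
    (hmeas : AEMeasurable h μ)
    (hint : Integrable (fun x => (‖h x‖ ^ 2 + (p⁻¹) ^ 2) ^ (p / 2)) μ) :
    (∫ x, (‖h x‖ ^ 2 + (q⁻¹) ^ 2) ^ (q / 2) ∂μ) ^ (1 / q)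
      ≤ (∫ x, (‖h x‖ ^ 2 + (p⁻¹) ^ 2) ^ (p / 2) ∂μ) ^ (1 / p)
        + Real.sqrt ((q⁻¹) ^ 2 - (p⁻¹) ^ 2) := by
  have hp : 1 ≤ p := le_trans hq hqp
  have hq0 : 0 < q := lt_of_lt_of_le one_pos hq
  have hp0 : 0 < p := lt_of_lt_of_le one_pos hp
  set F : ℝ → Ω → ℝ := fun r x => Real.sqrt (‖h x‖ ^ 2 + (r⁻¹) ^ 2) with hF
  set c : ℝ := Real.sqrt ((q⁻¹) ^ 2 - (p⁻¹) ^ 2) with hc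
  have hcnn : 0 ≤ c := Real.sqrt_nonneg _
  have hsub : 0 ≤ (q⁻¹) ^ 2 - (p⁻¹) ^ 2 := by
    have hle : p⁻¹ ≤ q⁻¹ := inv_anti₀ hq0 hqp
    nlinarith [inv_pos.2 hp0, inv_pos.2 hq0]
  -- pointwise rpow identity
  have hpow : ∀ (r : ℝ), 0 < r → ∀ x, F r x ^ r = (‖h x‖ ^ 2 + (r⁻¹) ^ 2) ^ (r / 2) := by
    intro r hr x
    have hnn : (0:ℝ) ≤ ‖h x‖ ^ 2 + (r⁻¹) ^ 2 := by positivity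
    rw [hF]
    simp only
    rw [Real.sqrt_eq_rpow, ← Real.rpow_mul hnn]
    congr 1
    ring
  have hFmeas : ∀ r : ℝ, AEStronglyMeasurable (F r) μ := fun r =>
    (Real.continuous_sqrt.measurable.comp_aemeasurable
      ((hmeas.norm.pow_const 2).add_const _)).aestronglyMeasurable
  have hFnn : ∀ (r : ℝ) x, 0 ≤ F r x := fun r x => Real.sqrt_nonneg _
  -- integrability of F p ^ p
  have hintp : Integrable (fun x => F p x ^ p) μ := by
    simp only [hpow p hp0]; exact hint
  have hne : ∀ r : ℝ, 0 < r → ENNReal.ofReal r ≠ 0 := fun r hr => by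
    simp [ENNReal.ofReal_eq_zero, not_le, hr]
  have hBp : eLpNorm (F p) (ENNReal.ofReal p) μ
      = ENNReal.ofReal ((∫ x, F p x ^ p ∂μ) ^ (1 / p)) :=
    eLpNorm_eq_aux μ (F p) p hp (hFnn p) hintp
  have hmemp : MemLp (F p) (ENNReal.ofReal p) μ :=
    ⟨hFmeas p, by rw [hBp]; exact ENNReal.ofReal_lt_top⟩
  -- pointwise bound
  have hpt : ∀ x, F q x ≤ F p x + c := by
    intro x
    have : ‖h x‖ ^ 2 + (q⁻¹) ^ 2
        = (‖h x‖ ^ 2 + (p⁻¹) ^ 2) + ((q⁻¹) ^ 2 - (p⁻¹) ^ 2) := by ring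
    calc F q x = Real.sqrt ((‖h x‖ ^ 2 + (p⁻¹) ^ 2) + ((q⁻¹) ^ 2 - (p⁻¹) ^ 2)) := by
          rw [hF]; simp only; rw [this]
      _ ≤ F p x + c := sqrt_add_le_aux (by positivity) hsub
  -- Memℒp of F q at exponent q
  have hmempq : MemLp (F p) (ENNReal.ofReal q) μ :=
    hmemp.mono_exponent (ENNReal.ofReal_le_ofReal hqp)
  have hmemsum : MemLp (fun x => F p x + c) (ENNReal.ofReal q) μ :=
    hmempq.add (memLp_const c)
  have hmemq : MemLp (F q) (ENNReal.ofReal q) μ :=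
    hmemsum.of_le (hFmeas q) (Filter.Eventually.of_forall fun x => by
      rw [Real.norm_of_nonneg (hFnn q x)]
      exact (hpt x).trans (le_abs_self _))
  have hintq : Integrable (fun x => F q x ^ q) μ := by
    have := hmemq.integrable_norm_rpow (hne q hq0) ENNReal.ofReal_ne_top
    rw [ENNReal.toReal_ofReal hq0.le] at this
    refine this.congr (Filter.Eventually.of_forall fun x => ?_)
    simp only [Real.norm_of_nonneg (hFnn q x)]
  have hAq : eLpNorm (F q) (ENNReal.ofReal q) μ
      = ENNReal.ofReal ((∫ x, F q x ^ q ∂μ) ^ (1 / q)) :=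
    eLpNorm_eq_aux μ (F q) q hq (hFnn q) hintq
  -- main chain in ℝ≥0∞
  have hconst : eLpNorm (fun _ : Ω => c) (ENNReal.ofReal q) μ = ENNReal.ofReal c := by
    rw [eLpNorm_const' c (hne q hq0) ENNReal.ofReal_ne_top]
    simp [Real.enorm_eq_ofReal hcnn]
  have key : eLpNorm (F q) (ENNReal.ofReal q) μ
      ≤ eLpNorm (F p) (ENNReal.ofReal p) μ + ENNReal.ofReal c := by
    calc eLpNorm (F q) (ENNReal.ofReal q) μ
        ≤ eLpNorm (fun x => F p x + c) (ENNReal.ofReal q) μ :=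
          eLpNorm_mono_real fun x => by
            rw [Real.norm_of_nonneg (hFnn q x)]; exact hpt x
      _ ≤ eLpNorm (F p) (ENNReal.ofReal q) μ
          + eLpNorm (fun _ : Ω => c) (ENNReal.ofReal q) μ :=
          eLpNorm_add_le (hFmeas p) aestronglyMeasurable_const
            (by simpa using ENNReal.ofReal_le_ofReal hq)
      _ ≤ eLpNorm (F p) (ENNReal.ofReal p) μ + ENNReal.ofReal c :=
          add_le_add (eLpNorm_le_eLpNorm_of_exponent_le
            (ENNReal.ofReal_le_ofReal hqp) (hFmeas p)) hconst.le
  -- convert back to real numbers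
  have hconv : ∀ (r : ℝ), 0 < r →
      (∫ x, (‖h x‖ ^ 2 + (r⁻¹) ^ 2) ^ (r / 2) ∂μ) = ∫ x, F r x ^ r ∂μ := fun r hr =>
    integral_congr_ae (Filter.Eventually.of_forall fun x => (hpow r hr x).symm)
  rw [hconv q hq0, hconv p hp0]
  have h1 : (∫ x, F q x ^ q ∂μ) ^ (1 / q)
      = (eLpNorm (F q) (ENNReal.ofReal q) μ).toReal := by
    rw [hAq, ENNReal.toReal_ofReal (by positivity)]
  have h2 : (∫ x, F p x ^ p ∂μ) ^ (1 / p)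
      = (eLpNorm (F p) (ENNReal.ofReal p) μ).toReal := by
    rw [hBp, ENNReal.toReal_ofReal (by positivity)]
  rw [h1, h2]
  have hfin : eLpNorm (F p) (ENNReal.ofReal p) μ + ENNReal.ofReal c ≠ ∞ := by
    rw [hBp]; exact ENNReal.add_ne_top.2 ⟨ENNReal.ofReal_ne_top, ENNReal.ofReal_ne_top⟩
  have := ENNReal.toReal_mono hfin key
  rwa [ENNReal.toReal_add (by rw [hBp]; exact ENNReal.ofReal_ne_top) ENNReal.ofReal_ne_top,
    ENNReal.toReal_ofReal hcnn] at this
end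

section
/- Let X be a compact metric space, K_p → K uniformly on X with K continuous, and let Σ_p be finite positive Borel measures on X with Σ_p(X) ≤ 1 such that Σ_p has density (|K_p|²+p⁻²)^{(p−1)/2}/‖K_p‖_{Ḃp}^{p−1} with respect to a fixed probability measure ν, and Σ_p ⇀* Σ_∞ weakly-star in measures. Then Σ_∞ is concentrated on the set where |K| attains its maximum over X: Σ_∞({x : |K(x)| < max_X |K|}) = 0. -/
open MeasureTheory Filter

/-- If `K_p → K` uniformly on a compact metric space `X`, `Σ_p` are positive Borel
measures with `Σ_p(X) ≤ 1` having density `(|K_p|²+p⁻²)^{(p−1)/2}/‖K_p‖_{Ḃp}^{p−1}`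
with respect to a probability measure `ν` (with `‖K_p‖_{Ḃp} → max_X |K|`), and
`Σ_p ⇀* Σ_∞` weakly-star, then `Σ_∞` concentrates on the set where `|K|` attains its
maximum over `X`: `Σ_∞({|K| < max_X |K|}) = 0`. -/
theorem stmt_8 {X : Type*} [MetricSpace X] [CompactSpace X] [Nonempty X]
    [MeasurableSpace X] [BorelSpace X]
    (ν : Measure X) [IsProbabilityMeasure ν]
    {N : ℕ} (K : ℝ → X → EuclideanSpace ℝ (Fin N)) (Klim : X → EuclideanSpace ℝ (Fin N))
    (hKc : ∀ p, Continuous (K p)) (hKlim : Continuous Klim)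
    (hunif : TendstoUniformly K Klim atTop)
    (b : ℝ → ℝ)
    (hb : ∀ p, 1 < p → b p = (∫ x, (‖K p x‖ ^ 2 + (p⁻¹) ^ 2) ^ (p / 2) ∂ν) ^ (1 / p))
    (hbt : Tendsto b atTop (nhds (⨆ x, ‖Klim x‖)))
    (Sg : ℝ → Measure X)
    (hSg : ∀ p, 1 < p → Sg p = ν.withDensity
      (fun x => ENNReal.ofReal ((‖K p x‖ ^ 2 + (p⁻¹) ^ 2) ^ ((p - 1) / 2) / (b p) ^ (p - 1))))
    (hSgb : ∀ p, 1 < p → Sg p Set.univ ≤ 1)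
    (Slim : Measure X) [IsFiniteMeasure Slim]
    (hws : ∀ φ : C(X, ℝ), Tendsto (fun p => ∫ x, φ x ∂(Sg p)) atTop
      (nhds (∫ x, φ x ∂Slim))) :
    Slim {x | ‖Klim x‖ < ⨆ y, ‖Klim y‖} = 0 := by
  set M := ⨆ y, ‖Klim y‖ with hMdef
  have hbdd : BddAbove (Set.range fun x => ‖Klim x‖) :=
    (isCompact_range hKlim.norm).bddAbove
  have hMub : ∀ x, ‖Klim x‖ ≤ M := fun x => le_ciSup hbdd x
  by_cases hMpos : 0 < M
  swap
  · have hempty : {x | ‖Klim x‖ < M} = ∅ := by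
      ext x
      simp only [Set.mem_setOf_eq, Set.mem_empty_iff_false, iff_false, not_lt]
      push_neg at hMpos
      exact le_trans hMpos (norm_nonneg _)
    rw [hempty]; exact measure_empty
  -- core claim: Slim of sublevel sets vanishes
  have key : ∀ δ : ℝ, 0 < δ → δ < M → Slim {x | ‖Klim x‖ ≤ M - δ} = 0 := by
    intro δ hδ hδM
    set ε : ℝ := δ / 2 with hεdef
    have hε : 0 < ε := by positivity
    have hεM : ε < M := by
      rw [hεdef]; linarith
    -- Urysohn function: 1 on {‖Klim‖ ≤ M - δ}, 0 on {M - ε ≤ ‖Klim‖}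
    obtain ⟨φ, hφ0, hφ1, hφ01⟩ :=
      exists_continuous_zero_one_of_isClosed
        (isClosed_le continuous_const hKlim.norm :
          IsClosed {x : X | M - ε ≤ ‖Klim x‖})
        (isClosed_le hKlim.norm continuous_const :
          IsClosed {x : X | ‖Klim x‖ ≤ M - δ})
        (by
          rw [Set.disjoint_left]
          intro x hxs hxt
          simp only [Set.mem_setOf_eq] at hxs hxt
          rw [hεdef] at hxs
          linarith)
    -- constants
    set A : ℝ := M - ε / 2 with hAdef
    set B : ℝ := M - ε / 4 with hBdef
    have hA : 0 < A := by rw [hAdef]; linarith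
    have hB : 0 < B := by rw [hBdef]; linarith
    have hAB : A < B := by rw [hAdef, hBdef]; linarith
    set c : ℝ := A / B with hcdef
    have hc0 : 0 < c := div_pos hA hB
    have hc1 : c < 1 := (div_lt_one hB).2 hAB
    -- upper bound on the integrals, eventually in p
    have hev : ∀ᶠ p in atTop, (∫ x, φ x ∂(Sg p)) ≤ c ^ (p - 1) := by
      have e1 : ∀ᶠ p : ℝ in atTop, (1 : ℝ) < p := eventually_gt_atTop 1
      have e2 : ∀ᶠ p in atTop, ∀ x, dist (Klim x) (K p x) < ε / 4 :=
        Metric.tendstoUniformly_iff.1 hunif (ε / 4) (by positivity)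
      have e3 : ∀ᶠ p : ℝ in atTop, 4 / ε ≤ p := eventually_ge_atTop (4 / ε)
      have hBM : B < M := by rw [hBdef]; linarith
      have e4 : ∀ᶠ p in atTop, B ≤ b p := hbt.eventually (eventually_ge_nhds hBM)
      filter_upwards [e1, e2, e3, e4] with p hp1 hp2 hp3 hp4
      have hp0 : 0 < p := lt_trans one_pos hp1
      have hpinv : p⁻¹ ≤ ε / 4 := by
        have h4ε : 0 < 4 / ε := by positivity
        calc p⁻¹ ≤ (4 / ε)⁻¹ := by
              exact inv_anti₀ h4ε hp3
          _ = ε / 4 := by rw [inv_div]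
      have hbp : 0 < b p := lt_of_lt_of_le hB hp4
      set g : X → ℝ :=
        fun x => (‖K p x‖ ^ 2 + (p⁻¹) ^ 2) ^ ((p - 1) / 2) / (b p) ^ (p - 1) with hgdef
      have hgc : Continuous g := by
        apply Continuous.div_const
        apply Continuous.rpow_const
        · exact (((hKc p).norm.pow 2).add continuous_const)
        · intro x; right; linarith
      have hgnn : ∀ x, 0 ≤ g x := fun x =>
        div_nonneg (Real.rpow_nonneg (by positivity) _) (Real.rpow_nonneg hbp.le _)
      have hint : ∫ x, φ x ∂(Sg p) = ∫ x, g x * φ x ∂ν := by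
        rw [hSg p hp1]
        rw [show (fun x => ENNReal.ofReal (g x)) = fun x => ((Real.toNNReal (g x) : NNReal) : ENNReal) from rfl]
        rw [integral_withDensity_eq_integral_smul (f := fun x => Real.toNNReal (g x)) (hgc.measurable.real_toNNReal) (fun x => φ x)]
        congr 1
        ext x
        simp [NNReal.smul_def, Real.coe_toNNReal _ (hgnn x)]
      rw [hint]
      have hconst : ∫ _x : X, c ^ (p - 1) ∂ν = c ^ (p - 1) := by
        simp
      rw [← hconst]
      apply integral_mono
      · exact (hgc.mul φ.continuous).integrable_of_hasCompactSupport
          (HasCompactSupport.of_compactSpace _)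
      · exact integrable_const _
      intro x
      show g x * φ x ≤ c ^ (p - 1)
      by_cases hx : M - ε ≤ ‖Klim x‖
      · have hφx : φ x = 0 := by simpa using hφ0 hx
        rw [hφx, mul_zero]
        exact Real.rpow_nonneg hc0.le _
      · push_neg at hx
        have hKx := hp2 x
        have hKb : ‖K p x‖ ≤ M - 3 * ε / 4 := by
          have h1 : ‖K p x‖ - ‖Klim x‖ ≤ ‖K p x - Klim x‖ := norm_sub_norm_le _ _
          have h2 : ‖K p x - Klim x‖ = dist (Klim x) (K p x) := by
            rw [dist_comm, dist_eq_norm]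
          linarith
        have ha : ‖K p x‖ ^ 2 + (p⁻¹) ^ 2 ≤ A ^ 2 := by
          rw [hAdef]
          nlinarith [pow_le_pow_left₀ (norm_nonneg (K p x)) hKb 2,
            pow_le_pow_left₀ (inv_nonneg.2 hp0.le) hpinv 2,
            mul_pos hε (sub_pos.2 hεM), sq_nonneg ε]
        have h5 : (‖K p x‖ ^ 2 + (p⁻¹) ^ 2) ^ ((p - 1) / 2) ≤ A ^ (p - 1) := by
          calc (‖K p x‖ ^ 2 + (p⁻¹) ^ 2) ^ ((p - 1) / 2)
              ≤ (A ^ 2) ^ ((p - 1) / 2) :=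
                Real.rpow_le_rpow (by positivity) ha (by linarith)
            _ = A ^ (p - 1) := by
                rw [← Real.rpow_natCast A 2, ← Real.rpow_mul hA.le]
                congr 1
                push_cast
                ring
        have h6 : g x ≤ c ^ (p - 1) := by
          have hd : g x ≤ A ^ (p - 1) / (b p) ^ (p - 1) := by
            exact (div_le_div_iff_of_pos_right (Real.rpow_pos_of_pos hbp _)).2 h5
          have he : A ^ (p - 1) / (b p) ^ (p - 1) ≤ c ^ (p - 1) := by
            rw [hcdef, Real.div_rpow hA.le hB.le]
            apply div_le_div_of_nonneg_left (Real.rpow_nonneg hA.le _)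
              (Real.rpow_pos_of_pos hB _) (Real.rpow_le_rpow hB.le hp4 (by linarith))
          exact le_trans hd he
        calc g x * φ x ≤ g x * 1 := by
              exact mul_le_mul_of_nonneg_left (hφ01 x).2 (hgnn x)
          _ = g x := mul_one _
          _ ≤ c ^ (p - 1) := h6
    have hev0 : ∀ p, 0 ≤ ∫ x, φ x ∂(Sg p) := fun p =>
      integral_nonneg fun x => (hφ01 x).1
    have hctend : Tendsto (fun p : ℝ => c ^ (p - 1)) atTop (nhds 0) := by
      have := (tendsto_rpow_atTop_of_base_lt_one c (by linarith) hc1).comp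
        (tendsto_atTop_add_const_right atTop (-1 : ℝ) tendsto_id)
      simpa [Function.comp_def, sub_eq_add_neg] using this
    have hlim0 : Tendsto (fun p => ∫ x, φ x ∂(Sg p)) atTop (nhds 0) :=
      tendsto_of_tendsto_of_tendsto_of_le_of_le' tendsto_const_nhds hctend
        (Eventually.of_forall hev0) hev
    have hint0 : ∫ x, φ x ∂Slim = 0 := tendsto_nhds_unique (hws φ) hlim0
    -- conclude Slim of the closed set is 0
    have hmeas : MeasurableSet {x : X | ‖Klim x‖ ≤ M - δ} :=
      (isClosed_le hKlim.norm continuous_const).measurableSet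
    have hle : (Slim {x : X | ‖Klim x‖ ≤ M - δ}).toReal ≤ ∫ x, φ x ∂Slim := by
      change Slim.real {x : X | ‖Klim x‖ ≤ M - δ} ≤ _
      rw [← integral_indicator_one hmeas]
      apply integral_mono
      · exact (integrable_const (1 : ℝ)).indicator hmeas
      · exact φ.continuous.integrable_of_hasCompactSupport
          (HasCompactSupport.of_compactSpace _)
      intro x
      show Set.indicator _ _ x ≤ φ x
      by_cases hx : x ∈ {x : X | ‖Klim x‖ ≤ M - δ}
      · rw [Set.indicator_of_mem hx]
        have := hφ1 hx
        simpa using this.ge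
      · rw [Set.indicator_of_notMem hx]
        exact (hφ01 x).1
    rw [hint0] at hle
    have hnn : 0 ≤ (Slim {x : X | ‖Klim x‖ ≤ M - δ}).toReal := ENNReal.toReal_nonneg
    have : (Slim {x : X | ‖Klim x‖ ≤ M - δ}).toReal = 0 := le_antisymm hle hnn
    exact (ENNReal.toReal_eq_zero_iff _).1 this |>.resolve_right (measure_ne_top _ _)
  -- union argument
  have hsub : {x : X | ‖Klim x‖ < M} ⊆
      ⋃ n : ℕ, {x : X | ‖Klim x‖ ≤ M - min ((n : ℝ) + 1)⁻¹ (M / 2)} := by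
    intro x hx
    simp only [Set.mem_setOf_eq] at hx
    obtain ⟨n, hn⟩ := exists_nat_one_div_lt (sub_pos.2 hx)
    refine Set.mem_iUnion.2 ⟨n, ?_⟩
    simp only [Set.mem_setOf_eq]
    have h1 : min ((n : ℝ) + 1)⁻¹ (M / 2) ≤ ((n : ℝ) + 1)⁻¹ := min_le_left _ _
    have h2 : ((n : ℝ) + 1)⁻¹ ≤ M - ‖Klim x‖ := by
      rw [← one_div]; linarith
    linarith
  refine measure_mono_null hsub (measure_iUnion_null fun n => key _ ?_ ?_)
  · apply lt_min (by positivity) (by positivity)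
  · exact lt_of_le_of_lt (min_le_right _ _) (by linarith)
end

section
/- Let (Ω,μ) be a probability space and suppose functionals F_p (p ∈ (1,∞)) and F_∞ on a set 𝔛 satisfy: F_p(v) ≤ F_∞(v) + p⁻¹ for all v, and for fixed q, F_q(v) − sqrt(q⁻² − p⁻²) ≤ F_p(v) for all p ≥ q and v. If v_p minimizes F_p over 𝔛, v_p → v_∞ in a topology in which each F_q is sequentially lower semicontinuous, and v_∞ ∈ 𝔛, then v_∞ minimizes F_∞ over 𝔛 and F_p(v_p) → F_∞(v_∞) along the convergent subsequence, where F_∞(v) = lim_{q→∞} F_q(v) assuming F_q(v) + q⁻¹ decreasing bounds hold (i.e., F_∞(v) = sup_q (F_q(v) − q⁻¹)). -/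
open Filter

/-- Abstract Γ-convergence scheme for passing from `L^p` to `L^∞` minimizers:
if `F_p ≤ F_∞ + p⁻¹`, `F_q − sqrt(q⁻²−p⁻²) ≤ F_p` for `q ≤ p`, each `v_p` minimizes
`F_p` over `𝔛`, the `F_q` are sequentially lower semicontinuous along `v_p → v_∞`
(expressed via liminf), and `F_q(v) → F_∞(v)` for every `v`, then `v_∞` minimizes
`F_∞` and `F_p(v_p) → F_∞(v_∞)`. -/
theorem stmt_10 {𝔛 : Type*} (F : ℝ → 𝔛 → ℝ) (Finf : 𝔛 → ℝ)
    (vp : ℝ → 𝔛) (vinf : 𝔛)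
    (hnonneg : ∀ p, 1 < p → ∀ v, 0 ≤ F p v)
    (h1 : ∀ p, 1 < p → ∀ v, F p v ≤ Finf v + p⁻¹)
    (h2 : ∀ q p, 1 < q → q ≤ p → ∀ v,
      F q v - Real.sqrt ((q⁻¹) ^ 2 - (p⁻¹) ^ 2) ≤ F p v)
    (hmin : ∀ p, 1 < p → ∀ v, F p (vp p) ≤ F p v)
    (hlsc : ∀ q, 1 < q → F q vinf ≤ liminf (fun p => F q (vp p)) atTop)
    (hlim : ∀ v, Tendsto (fun q => F q v) atTop (nhds (Finf v))) :
    (∀ v, Finf vinf ≤ Finf v) ∧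
    Tendsto (fun p => F p (vp p)) atTop (nhds (Finf vinf)) := by
  set g : ℝ → ℝ := fun p => F p (vp p) with hg
  have hevgt : ∀ᶠ p : ℝ in atTop, 1 < p := eventually_gt_atTop 1
  have hlb : ∀ᶠ p in atTop, (0 : ℝ) ≤ g p := hevgt.mono fun p hp => hnonneg p hp _
  have hbdd_below : IsBoundedUnder (· ≥ ·) atTop g := isBoundedUnder_of_eventually_ge hlb
  have hcobdd_le : IsCoboundedUnder (· ≤ ·) atTop g := hbdd_below.isCoboundedUnder_le
  -- eventual upper bound via any v
  have hev_ub : ∀ v, ∀ᶠ p in atTop, g p ≤ Finf v + p⁻¹ := by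
    intro v
    exact hevgt.mono fun p hp => (hmin p hp v).trans (h1 p hp v)
  have hbdd_above : IsBoundedUnder (· ≤ ·) atTop g := by
    refine isBoundedUnder_of_eventually_le (a := Finf vinf + 1) ?_
    filter_upwards [hev_ub vinf, eventually_ge_atTop (1:ℝ)] with p h1p h2p
    have : p⁻¹ ≤ 1 := inv_le_one_of_one_le₀ h2p
    linarith
  have hcobdd_ge : IsCoboundedUnder (· ≥ ·) atTop g := hbdd_above.isCoboundedUnder_ge
  -- Step A : limsup g ≤ Finf v for every v
  have hA : ∀ v, limsup g atTop ≤ Finf v := by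
    intro v
    have ht : Tendsto (fun p : ℝ => Finf v + p⁻¹) atTop (nhds (Finf v + 0)) :=
      tendsto_const_nhds.add tendsto_inv_atTop_zero
    have hbd : IsBoundedUnder (· ≤ ·) atTop (fun p : ℝ => Finf v + p⁻¹) :=
      ht.isBoundedUnder_le
    calc limsup g atTop ≤ limsup (fun p : ℝ => Finf v + p⁻¹) atTop :=
          limsup_le_limsup (hev_ub v) hcobdd_le hbd
      _ = Finf v + 0 := ht.limsup_eq
      _ = Finf v := add_zero _
  -- Step B : Finf vinf ≤ liminf g
  have hB : Finf vinf ≤ liminf g atTop := by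
    have key : ∀ q : ℝ, 1 < q → F q vinf - q⁻¹ ≤ liminf g atTop := by
      intro q hq
      have hq0 : (0:ℝ) < q⁻¹ := inv_pos.mpr (lt_trans one_pos hq)
      have hev : ∀ᶠ p in atTop, F q (vp p) ≤ g p + q⁻¹ := by
        filter_upwards [eventually_ge_atTop q] with p hp
        have hsqrt : Real.sqrt ((q⁻¹) ^ 2 - (p⁻¹) ^ 2) ≤ q⁻¹ := by
          have h1' : (q⁻¹) ^ 2 - (p⁻¹) ^ 2 ≤ (q⁻¹) ^ 2 := by
            nlinarith [sq_nonneg (p⁻¹)]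
          calc Real.sqrt ((q⁻¹) ^ 2 - (p⁻¹) ^ 2) ≤ Real.sqrt ((q⁻¹) ^ 2) :=
                Real.sqrt_le_sqrt h1'
            _ = q⁻¹ := Real.sqrt_sq hq0.le
        have := h2 q p hq hp (vp p)
        linarith
      have hbd2 : IsBoundedUnder (· ≥ ·) atTop (fun p : ℝ => F q (vp p)) := by
        refine isBoundedUnder_of_eventually_ge (a := (0:ℝ)) ?_
        exact Eventually.of_forall fun p => hnonneg q hq (vp p)
      have hcob2 : IsCoboundedUnder (· ≥ ·) atTop (fun p : ℝ => g p + q⁻¹) := by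
        refine IsBoundedUnder.isCoboundedUnder_ge (isBoundedUnder_of_eventually_le
          (a := Finf vinf + 1 + q⁻¹) ?_)
        filter_upwards [hev_ub vinf, eventually_ge_atTop (1:ℝ)] with p h1p h2p
        have : p⁻¹ ≤ 1 := inv_le_one_of_one_le₀ h2p
        linarith
      calc F q vinf - q⁻¹ ≤ liminf (fun p => F q (vp p)) atTop - q⁻¹ := by
            linarith [hlsc q hq]
        _ ≤ liminf (fun p => g p + q⁻¹) atTop - q⁻¹ := by
            linarith [liminf_le_liminf hev hbd2 hcob2]
        _ = liminf g atTop + q⁻¹ - q⁻¹ := by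
            rw [liminf_add_const atTop g q⁻¹ hcobdd_ge hbdd_below]
        _ = liminf g atTop := by ring
    have ht : Tendsto (fun q : ℝ => F q vinf - q⁻¹) atTop (nhds (Finf vinf - 0)) :=
      (hlim vinf).sub tendsto_inv_atTop_zero
    have := le_of_tendsto ht ((eventually_gt_atTop (1:ℝ)).mono fun q hq => key q hq)
    simpa using this
  have hli_le_ls : liminf g atTop ≤ limsup g atTop := liminf_le_limsup hbdd_above hbdd_below
  constructor
  · intro v
    exact le_trans hB (le_trans hli_le_ls (hA v))
  · have h1' : liminf g atTop = Finf vinf :=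
      le_antisymm (le_trans hli_le_ls (hA vinf)) hB
    have h2' : limsup g atTop = Finf vinf :=
      le_antisymm (hA vinf) (h1' ▸ hli_le_ls)
    exact tendsto_of_liminf_eq_limsup h1' h2' hbdd_above hbdd_below
end
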